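/- ∫_0^1 log(1 + 4 sin²(πx)) dx = 2 log((1+√5)/2). -/

import Mathlib

/-!
Since `|e^{iθ} - a|² = a² - 2a cos θ + 1`, the mean of `log (a² - 2a cos θ + 1)` over a period
is twice the circle average of `log |z - a|` on the unit circle, which is `2 log⁺ |a|`
(Jensen's formula for `z - a`). For `a = φ²` one has `a² + 1 = 3a`, so
`a² - 2a cos 2πx + 1 = a (1 + 4 sin² πx)`, and the integral is `2 log a - log a = 2 log φ`.
-/

open Real intervalIntegral

theorem norm_circleMap_zero_one_sub_ofReal_sq (a θ : ℝ) :
    ‖circleMap 0 1 θ - a‖ ^ 2 = a ^ 2 - 2 * a * cos θ + 1 := by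
  rw [Complex.sq_norm, Complex.normSq_apply]
  simp only [circleMap, zero_add, Complex.ofReal_one, one_mul, Complex.sub_re, Complex.sub_im,
    Complex.exp_ofReal_mul_I_re, Complex.exp_ofReal_mul_I_im, Complex.ofReal_re,
    Complex.ofReal_im]
  linear_combination sin_sq_add_cos_sq θ

theorem integral_log_sq_sub_two_mul_mul_cos_add_one (a : ℝ) :
    ∫ x in (0 : ℝ)..1, log (a ^ 2 - 2 * a * cos (2 * π * x) + 1) = 2 * log⁺ a := by
  have hlog : ∀ θ, log (a ^ 2 - 2 * a * cos θ + 1) = 2 * log ‖circleMap 0 1 θ - a‖ := by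
    intro θ
    rw [← norm_circleMap_zero_one_sub_ofReal_sq, log_pow, Nat.cast_ofNat]
  have hav := circleAverage_log_norm_sub_const_eq_posLog (a := (a : ℂ))
  rw [circleAverage_def, Complex.norm_real, norm_eq_abs, posLog_abs] at hav
  simp only [hlog, integral_const_mul, integral_comp_mul_left (fun θ ↦ log ‖circleMap 0 1 θ - a‖)
    two_pi_pos.ne', mul_zero, mul_one, hav]

theorem goldenRatio_sq_mul_one_add_four_mul_sin_sq (x : ℝ) :
    goldenRatio ^ 2 * (1 + 4 * sin x ^ 2) =
      (goldenRatio ^ 2) ^ 2 - 2 * goldenRatio ^ 2 * cos (2 * x) + 1 := by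
  rw [cos_two_mul, cos_sq']
  linear_combination (1 - goldenRatio - goldenRatio ^ 2) * goldenRatio_sq

open Real in
/-- `∫_0^1 log(1 + 4 sin²(πx)) dx = 2 log((1+√5)/2)`. -/
theorem integral_log_one_add_four_sin_sq :
    ∫ x in (0:ℝ)..1, Real.log (1 + 4 * Real.sin (π * x) ^ 2)
      = 2 * Real.log ((1 + Real.sqrt 5) / 2) := by
  change _ = 2 * log goldenRatio
  set a := goldenRatio ^ 2
  have ha : 1 < a := one_lt_pow₀ one_lt_goldenRatio two_ne_zero
  have hfactor : ∀ x, a ^ 2 - 2 * a * cos (2 * π * x) + 1 = a * (1 + 4 * sin (π * x) ^ 2) := by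
    intro x
    rw [mul_assoc 2 π, ← goldenRatio_sq_mul_one_add_four_mul_sin_sq]
  have hlog : ∀ x, log (1 + 4 * sin (π * x) ^ 2) =
      log (a ^ 2 - 2 * a * cos (2 * π * x) + 1) - log a := by
    intro x
    rw [hfactor, log_mul (by positivity) (by positivity), add_sub_cancel_left]
  have hint : IntervalIntegrable (fun x ↦ log (a ^ 2 - 2 * a * cos (2 * π * x) + 1))
      MeasureTheory.volume 0 1 :=
    (Continuous.log (by fun_prop) fun x ↦ by rw [hfactor]; positivity).intervalIntegrable 0 1
  rw [integral_congr fun x _ ↦ hlog x, integral_sub hint intervalIntegrable_const,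
    integral_log_sq_sub_two_mul_mul_cos_add_one,
    posLog_eq_log (ha.le.trans (le_abs_self a)), integral_const, log_pow]
  simp only [Nat.cast_ofNat, sub_zero, smul_eq_mul, one_mul]
  ring
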